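/- Let K be a compact Hausdorff space, X a real Banach space, and G a countably additive, regular X-valued Borel vector measure on K with semivariation ‖G‖(K) = 1. Let 0 < η < 1 and 0 < γ < 1. Assume f ∈ C(K) with ‖f‖ = 1 and x* ∈ X* with ‖x*‖ = 1 satisfy ∫_K f d(x*G) > 1 − η. Then there exist mutually disjoint compact sets F⁺, F⁻ ⊆ K such that the signed measure x*G is positive on F⁺ and negative on F⁻, and ∫_{(F⁺ ∩ A⁺_γ) ∪ (F⁻ ∩ A⁻_γ)} f d(x*G) > 1 − 4η/γ, where A⁺_γ = {t ∈ K : f(t) ≥ 1 − γ} and A⁻_γ = {t ∈ K : f(t) ≤ −1 + γ}. -/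

import Mathlib

/-!
Let `P` be a Hahn set for `μ = x*G` and fold `f` into `g = f` on `P`, `g = -f` off `P`, so that
`∫_S f dμ = ∫_S g d|μ|` for every Borel `S`, `g ≤ 1` and `|μ|(K) ≤ ‖G‖(K) = 1`. Off
`B = (P ∩ A⁺_γ) ∪ (Pᶜ ∩ A⁻_γ)` we have `g < 1 - γ`, so `1 - η < ∫ g d|μ| ≤ 1 - γ |μ|(Bᶜ)`:
thus `|μ|(Bᶜ) < η / γ` and `∫_B g d|μ| > 1 - η / γ`. Regularity of `G` gives compact `F⁺ ⊆ P`
and `F⁻ ⊆ Pᶜ` with `|μ|(P \ F⁺), |μ|(Pᶜ \ F⁻) < η / γ`, and cutting `B` down to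
`(F⁺ ∩ A⁺_γ) ∪ (F⁻ ∩ A⁻_γ)` loses at most `2η / γ`.
-/

open MeasureTheory

/-- The finite signed measure `E ↦ x*(G(E))` obtained from an `X`-valued vector measure `G`
and a continuous linear functional `x*`. -/
noncomputable def dualMeasure {K : Type*} [MeasurableSpace K] {X : Type*}
    [NormedAddCommGroup X] [NormedSpace ℝ X]
    (G : VectorMeasure K X) (xs : StrongDual ℝ X) : SignedMeasure K :=
  G.mapRange xs.toLinearMap.toAddMonoidHom xs.continuous

/-- The integral of a function against a signed measure, via the Jordan decomposition. -/
noncomputable def sintegral {K : Type*} [MeasurableSpace K]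
    (s : SignedMeasure K) (f : K → ℝ) : ℝ :=
  (∫ t, f t ∂s.toJordanDecomposition.posPart) - ∫ t, f t ∂s.toJordanDecomposition.negPart

/-- The semivariation `‖G‖(A) = sup {|x*G|(A) : ‖x*‖ ≤ 1}` of a vector measure. -/
noncomputable def semivariation {K : Type*} [MeasurableSpace K] {X : Type*}
    [NormedAddCommGroup X] [NormedSpace ℝ X]
    (G : VectorMeasure K X) (A : Set K) : ENNReal :=
  ⨆ xs ∈ Metric.closedBall (0 : StrongDual ℝ X) 1,
    (dualMeasure G xs).totalVariation A

/-- Regularity of a vector measure: every Borel set can be approximated from inside by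
compact sets and from outside by open sets in semivariation. -/
def IsRegularVM {K : Type*} [TopologicalSpace K] [MeasurableSpace K] {X : Type*}
    [NormedAddCommGroup X] [NormedSpace ℝ X] (G : VectorMeasure K X) : Prop :=
  ∀ E : Set K, MeasurableSet E → ∀ ε : ℝ, 0 < ε →
    ∃ F O : Set K, IsCompact F ∧ IsOpen O ∧ F ⊆ E ∧ E ⊆ O ∧
      semivariation G (O \ F) < ENNReal.ofReal ε

namespace MeasureTheory

variable {α : Type*} [MeasurableSpace α]

noncomputable def JordanDecomposition.restrict (j : JordanDecomposition α) (S : Set α) :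
    JordanDecomposition α where
  posPart := j.posPart.restrict S
  negPart := j.negPart.restrict S
  mutuallySingular := j.mutuallySingular.mono Measure.restrict_le_self Measure.restrict_le_self

theorem JordanDecomposition.toSignedMeasure_restrict (j : JordanDecomposition α) {S : Set α}
    (hS : MeasurableSet S) : (j.restrict S).toSignedMeasure = j.toSignedMeasure.restrict S := by
  ext E hE
  simp [JordanDecomposition.restrict, JordanDecomposition.toSignedMeasure,
    VectorMeasure.restrict_apply _ hS hE, Measure.toSignedMeasure_sub_apply hE,
    hE.inter hS, Measure.real, Measure.restrict_apply hE]

theorem SignedMeasure.toJordanDecomposition_restrict (s : SignedMeasure α) {S : Set α}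
    (hS : MeasurableSet S) :
    SignedMeasure.toJordanDecomposition (s.restrict S) = s.toJordanDecomposition.restrict S :=
  SignedMeasure.toJordanDecomposition_eq <| by
    rw [JordanDecomposition.toSignedMeasure_restrict _ hS,
      SignedMeasure.toSignedMeasure_toJordanDecomposition]

section FiniteMeasure

variable {ν : Measure α} [IsFiniteMeasure ν] {g : α → ℝ}

theorem setIntegral_le_measureReal_of_le_one (hg : Integrable g ν) {S : Set α}
    (hS : MeasurableSet S) (hg1 : ∀ t ∈ S, g t ≤ 1) : ∫ t in S, g t ∂ν ≤ ν.real S := by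
  simpa using setIntegral_mono_on hg.integrableOn (integrable_const 1).integrableOn hS hg1

theorem setIntegral_sub_measureReal_diff_le (hg : Integrable g ν) (hg1 : ∀ t, g t ≤ 1)
    {B B' : Set α} (hB : MeasurableSet B) (hB' : MeasurableSet B') (hB'B : B' ⊆ B) :
    ∫ t in B, g t ∂ν - ν.real (B \ B') ≤ ∫ t in B', g t ∂ν := by
  have hsplit : ∫ t in B, g t ∂ν = ∫ t in B', g t ∂ν + ∫ t in B \ B', g t ∂ν := by
    rw [← setIntegral_union disjoint_sdiff_self_right (hB.diff hB') hg.integrableOn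
      hg.integrableOn, Set.union_sdiff_cancel hB'B]
  linarith [setIntegral_le_measureReal_of_le_one hg (hB.diff hB') fun t _ => hg1 t]

theorem one_sub_div_lt_setIntegral_of_one_sub_lt_integral (hν : ν.real Set.univ ≤ 1)
    (hg : Integrable g ν) (hg1 : ∀ t, g t ≤ 1) {γ η : ℝ} (hγ0 : 0 < γ) (hγ1 : γ ≤ 1)
    {B : Set α} (hB : MeasurableSet B) (hBc : ∀ t ∉ B, g t ≤ 1 - γ)
    (hint : 1 - η < ∫ t, g t ∂ν) : 1 - η / γ < ∫ t in B, g t ∂ν := by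
  have hsplit := integral_add_compl hB hg
  have hmass := measureReal_add_measureReal_compl (μ := ν) hB
  have hIB := setIntegral_le_measureReal_of_le_one hg hB fun t _ => hg1 t
  have hIBc : ∫ t in Bᶜ, g t ∂ν ≤ (1 - γ) * ν.real Bᶜ := by
    simpa [mul_comm] using
      setIntegral_mono_on hg.integrableOn (integrable_const (1 - γ)).integrableOn hB.compl hBc
  have hBc_lt : ν.real Bᶜ < η / γ := by
    rw [lt_div_iff₀ hγ0]
    nlinarith
  have : (1 - γ) * ν.real Bᶜ ≤ (1 - γ) * (η / γ) := by gcongr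
  have hη : (1 - γ) * (η / γ) = η / γ - η := by field_simp
  linarith

end FiniteMeasure

namespace SignedMeasure

theorem exists_compl_positive_negative_jordan (s : SignedMeasure α) :
    ∃ P : Set α, MeasurableSet P ∧ 0 ≤[P] s ∧ s ≤[Pᶜ] 0 ∧
      s.toJordanDecomposition.posPart Pᶜ = 0 ∧ s.toJordanDecomposition.negPart P = 0 := by
  obtain ⟨P, hP, hpos, hneg, hposPart, hnegPart⟩ := s.toJordanDecomposition_spec
  refine ⟨P, hP, hpos, hneg, ?_, ?_⟩
  · simp [hposPart, toMeasureOfZeroLE_apply _ hpos hP hP.compl]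
  · simp [hnegPart, toMeasureOfLEZero_apply _ hneg hP.compl hP]

variable (s : SignedMeasure α) {P : Set α} (hP : MeasurableSet P)
  (hposPart : s.toJordanDecomposition.posPart Pᶜ = 0)
  (hnegPart : s.toJordanDecomposition.negPart P = 0)
include hP hposPart hnegPart

theorem sintegral_restrict_eq_setIntegral_totalVariation [DecidablePred (· ∈ P)] {S : Set α}
    (hS : MeasurableSet S) {f : α → ℝ} (hf : Integrable f s.totalVariation) :
    sintegral (s.restrict S) f = ∫ t in S, P.piecewise f (-f) t ∂s.totalVariation := by
  have hg : Integrable (P.piecewise f (-f)) s.totalVariation :=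
    Integrable.piecewise hP hf.integrableOn hf.neg.integrableOn
  obtain ⟨hgpos, hgneg⟩ := integrable_add_measure.1 hg
  have hpos : P.piecewise f (-f) =ᵐ[s.toJordanDecomposition.posPart.restrict S] f := by
    refine ae_restrict_of_ae ?_
    filter_upwards [measure_eq_zero_iff_ae_notMem.1 hposPart] with t ht
    exact P.piecewise_eq_of_mem _ _ (not_not.1 ht)
  have hneg : P.piecewise f (-f) =ᵐ[s.toJordanDecomposition.negPart.restrict S] -f := by
    refine ae_restrict_of_ae ?_
    filter_upwards [measure_eq_zero_iff_ae_notMem.1 hnegPart] with t ht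
    exact P.piecewise_eq_of_notMem _ _ ht
  rw [sintegral, toJordanDecomposition_restrict s hS, totalVariation, Measure.restrict_add,
    integral_add_measure hgpos.restrict hgneg.restrict, integral_congr_ae hpos,
    integral_congr_ae hneg]
  simp only [JordanDecomposition.restrict, Pi.neg_apply, integral_neg, sub_eq_add_neg]

theorem one_sub_div_sub_two_mul_lt_sintegral_restrict (hs : s.totalVariation.real Set.univ ≤ 1)
    {f : α → ℝ} (hfm : Measurable f) (hf1 : ∀ t, |f t| ≤ 1) {η γ ε : ℝ} (hγ0 : 0 < γ)
    (hγ1 : γ ≤ 1) (hint : 1 - η < sintegral s f) {Fp Fm : Set α} (hFp : MeasurableSet Fp)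
    (hFm : MeasurableSet Fm) (hFpP : Fp ⊆ P) (hFmP : Fm ⊆ Pᶜ)
    (hPFp : s.totalVariation.real (P \ Fp) ≤ ε) (hPFm : s.totalVariation.real (Pᶜ \ Fm) ≤ ε) :
    1 - η / γ - 2 * ε <
      sintegral (s.restrict ((Fp ∩ {t | 1 - γ ≤ f t}) ∪ (Fm ∩ {t | f t ≤ -1 + γ}))) f := by
  classical
  set ν := s.totalVariation
  set g := P.piecewise f (-f)
  have hf : Integrable f ν :=
    .of_bound hfm.aestronglyMeasurable 1 (.of_forall fun t => (Real.norm_eq_abs _).trans_le (hf1 t))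
  have hg : Integrable g ν := Integrable.piecewise hP hf.integrableOn hf.neg.integrableOn
  have hg1 (t : α) : g t ≤ 1 := by
    have := abs_le.1 (hf1 t)
    by_cases ht : t ∈ P <;> simp [g, ht] <;> linarith
  have hAp : MeasurableSet {t | 1 - γ ≤ f t} := measurableSet_le measurable_const hfm
  have hAm : MeasurableSet {t | f t ≤ -1 + γ} := measurableSet_le hfm measurable_const
  set B := (P ∩ {t | 1 - γ ≤ f t}) ∪ (Pᶜ ∩ {t | f t ≤ -1 + γ})
  set B' := (Fp ∩ {t | 1 - γ ≤ f t}) ∪ (Fm ∩ {t | f t ≤ -1 + γ})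
  have hB : MeasurableSet B := (hP.inter hAp).union (hP.compl.inter hAm)
  have hB' : MeasurableSet B' := (hFp.inter hAp).union (hFm.inter hAm)
  have hBc : ∀ t ∉ B, g t ≤ 1 - γ := fun t ht => by
    by_cases hPt : t ∈ P <;> simp_all [g, B] <;> linarith
  have hIB : 1 - η / γ < ∫ t in B, g t ∂ν :=
    one_sub_div_lt_setIntegral_of_one_sub_lt_integral hs hg hg1 hγ0 hγ1 hB hBc <| by
      rwa [← setIntegral_univ, ← s.sintegral_restrict_eq_setIntegral_totalVariation hP hposPart
        hnegPart .univ hf, VectorMeasure.restrict_univ]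
  have hIB' := setIntegral_sub_measureReal_diff_le hg hg1 hB hB'
    (Set.union_subset_union (Set.inter_subset_inter_left _ hFpP)
      (Set.inter_subset_inter_left _ hFmP))
  have hdiff : ν.real (B \ B') ≤ ν.real (P \ Fp) + ν.real (Pᶜ \ Fm) := by
    refine (measureReal_mono ?_).trans (measureReal_union_le _ _)
    rintro t ⟨⟨hPt, hAt⟩ | ⟨hPt, hAt⟩, hB't⟩
    exacts [.inl ⟨hPt, fun h => hB't (.inl ⟨h, hAt⟩)⟩, .inr ⟨hPt, fun h => hB't (.inr ⟨h, hAt⟩)⟩]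
  rw [s.sintegral_restrict_eq_setIntegral_totalVariation hP hposPart hnegPart hB' hf]
  linarith

end SignedMeasure

end MeasureTheory

section VectorMeasure

variable {K : Type*} [MeasurableSpace K] {X : Type*} [NormedAddCommGroup X] [NormedSpace ℝ X]
  {G : VectorMeasure K X} {xs : StrongDual ℝ X}

theorem totalVariation_dualMeasure_le_semivariation (hxs : ‖xs‖ ≤ 1) (A : Set K) :
    (dualMeasure G xs).totalVariation A ≤ semivariation G A :=
  le_biSup (fun y => (dualMeasure G y).totalVariation A) (by simpa using hxs)

theorem IsRegularVM.exists_isCompact_subset_totalVariation_diff_lt [TopologicalSpace K]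
    (hG : IsRegularVM G) (hxs : ‖xs‖ ≤ 1) {E : Set K} (hE : MeasurableSet E) {ε : ℝ}
    (hε : 0 < ε) :
    ∃ F ⊆ E, IsCompact F ∧ (dualMeasure G xs).totalVariation.real (E \ F) < ε := by
  obtain ⟨F, O, hF, -, hFE, hEO, hOF⟩ := hG E hE ε hε
  refine ⟨F, hFE, hF, ENNReal.toReal_lt_of_lt_ofReal ?_⟩
  calc (dualMeasure G xs).totalVariation (E \ F)
      ≤ (dualMeasure G xs).totalVariation (O \ F) :=
        measure_mono (Set.sdiff_subset_sdiff_left hEO)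
    _ ≤ semivariation G (O \ F) := totalVariation_dualMeasure_le_semivariation hxs _
    _ < ENNReal.ofReal ε := hOF

end VectorMeasure

theorem exists_compact_posNeg_integral_gt_general
    {K : Type*} [TopologicalSpace K] [CompactSpace K] [T2Space K]
    [MeasurableSpace K] [BorelSpace K]
    {X : Type*} [NormedAddCommGroup X] [NormedSpace ℝ X]
    (G : VectorMeasure K X) (hreg : IsRegularVM G)
    (hGnorm : semivariation G Set.univ = 1)
    {η γ : ℝ} (hη0 : 0 < η) (hγ0 : 0 < γ) (hγ1 : γ < 1)
    (f : C(K, ℝ)) (hf : ‖f‖ = 1)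
    (xs : StrongDual ℝ X) (hxs : ‖xs‖ = 1)
    (hint : sintegral (dualMeasure G xs) (fun t => f t) > 1 - η) :
    ∃ Fp Fm : Set K, IsCompact Fp ∧ IsCompact Fm ∧ Disjoint Fp Fm ∧
      (∀ E : Set K, MeasurableSet E → E ⊆ Fp → 0 ≤ dualMeasure G xs E) ∧
      (∀ E : Set K, MeasurableSet E → E ⊆ Fm → dualMeasure G xs E ≤ 0) ∧
      sintegral ((dualMeasure G xs).restrict
          ((Fp ∩ {t | 1 - γ ≤ f t}) ∪ (Fm ∩ {t | f t ≤ -1 + γ})))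
        (fun t => f t) > 1 - 4 * η / γ := by
  have hε : 0 < η / γ := div_pos hη0 hγ0
  obtain ⟨P, hP, hμP, hμPc, hposPart, hnegPart⟩ :=
    (dualMeasure G xs).exists_compl_positive_negative_jordan
  obtain ⟨Fp, hFpP, hFp, hPFp⟩ := hreg.exists_isCompact_subset_totalVariation_diff_lt hxs.le hP hε
  obtain ⟨Fm, hFmP, hFm, hPFm⟩ :=
    hreg.exists_isCompact_subset_totalVariation_diff_lt hxs.le hP.compl hε
  have hmass : (dualMeasure G xs).totalVariation.real Set.univ ≤ 1 :=
    ENNReal.toReal_le_of_le_ofReal zero_le_one <| by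
      simpa [hGnorm] using totalVariation_dualMeasure_le_semivariation (G := G) hxs.le Set.univ
  have hf1 (t : K) : |f t| ≤ 1 := by simpa [hf] using f.norm_coe_le_norm t
  have hestimate := (dualMeasure G xs).one_sub_div_sub_two_mul_lt_sintegral_restrict hP hposPart
    hnegPart hmass f.measurable hf1 hγ0 hγ1.le hint hFp.isClosed.measurableSet
    hFm.isClosed.measurableSet hFpP hFmP hPFp.le hPFm.le
  refine ⟨Fp, Fm, hFp, hFm, disjoint_compl_right.mono hFpP hFmP,
    fun E _ hEF => VectorMeasure.nonneg_of_zero_le_restrict _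
      (VectorMeasure.restrict_le_restrict_subset _ _ hP hμP (hEF.trans hFpP)),
    fun E _ hEF => VectorMeasure.nonpos_of_restrict_le_zero _
      (VectorMeasure.restrict_le_restrict_subset _ _ hP.compl hμPc (hEF.trans hFmP)), ?_⟩
  rw [mul_div_assoc]
  linarith

/-- **Lemma (second part).** If `G` is a countably additive, regular `X`-valued Borel
vector measure on a compact Hausdorff space `K` with semivariation `‖G‖(K) = 1`,
`0 < η, γ < 1`, `f ∈ C(K)` with `‖f‖ = 1` and `x*` with `‖x*‖ = 1` satisfy
`∫_K f d(x*G) > 1 - η`, then there are disjoint compact sets `F⁺, F⁻` on which `x*G` is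
respectively positive and negative, with
`∫_{(F⁺ ∩ A⁺_γ) ∪ (F⁻ ∩ A⁻_γ)} f d(x*G) > 1 - 4η/γ`. -/
theorem exists_compact_posNeg_integral_gt
    {K : Type*} [TopologicalSpace K] [CompactSpace K] [T2Space K]
    [MeasurableSpace K] [BorelSpace K]
    {X : Type*} [NormedAddCommGroup X] [NormedSpace ℝ X] [CompleteSpace X]
    (G : VectorMeasure K X) (hreg : IsRegularVM G)
    (hGnorm : semivariation G Set.univ = 1)
    {η γ : ℝ} (hη0 : 0 < η) (hη1 : η < 1) (hγ0 : 0 < γ) (hγ1 : γ < 1)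
    (f : C(K, ℝ)) (hf : ‖f‖ = 1)
    (xs : StrongDual ℝ X) (hxs : ‖xs‖ = 1)
    (hint : sintegral (dualMeasure G xs) (fun t => f t) > 1 - η) :
    ∃ Fp Fm : Set K, IsCompact Fp ∧ IsCompact Fm ∧ Disjoint Fp Fm ∧
      (∀ E : Set K, MeasurableSet E → E ⊆ Fp → 0 ≤ dualMeasure G xs E) ∧
      (∀ E : Set K, MeasurableSet E → E ⊆ Fm → dualMeasure G xs E ≤ 0) ∧
      sintegral ((dualMeasure G xs).restrict
          ((Fp ∩ {t | 1 - γ ≤ f t}) ∪ (Fm ∩ {t | f t ≤ -1 + γ})))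
        (fun t => f t) > 1 - 4 * η / γ :=
  exists_compact_posNeg_integral_gt_general G hreg hGnorm hη0 hγ0 hγ1 f hf xs hxs hint
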